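/- arXiv:1708.03792 — 3 statements merged into one kernel-verified Lean document; each statement's English description precedes it below -/
import Mathlib

section
/- Let v₁, v₂, v₃ be the vertices of an equilateral triangle inscribed in the unit circle (vertices at angles 0, 2π/3, 4π/3). Then for every point p in the plane, max(‖p − v₁‖, ‖p − v₂‖, ‖p − v₃‖) ≥ 1, with equality exactly when p is the center of the circle. -/
open Real

/-- Point on the unit circle at angle `θ`. -/
noncomputable def circlePt (θ : ℝ) : EuclideanSpace ℝ (Fin 2) :=
  (WithLp.equiv 2 (Fin 2 → ℝ)).symm ![Real.cos θ, Real.sin θ]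

lemma dist_circlePt_sq (p : EuclideanSpace ℝ (Fin 2)) (θ : ℝ) :
    dist p (circlePt θ) ^ 2 = (p 0 - Real.cos θ) ^ 2 + (p 1 - Real.sin θ) ^ 2 := by
  rw [EuclideanSpace.dist_eq, Real.sq_sqrt (by positivity)]
  simp [circlePt, Fin.sum_univ_two, Real.dist_eq, sq_abs]

set_option maxHeartbeats 1000000 in
lemma one_le_of_one_le_sq {M : ℝ} (h0 : 0 ≤ M) (h1 : 1 ≤ M ^ 2) : 1 ≤ M := by
  nlinarith

lemma eq_one_of_sq_eq_one {a : ℝ} (h0 : 0 ≤ a) (h1 : a ^ 2 = 1) : a = 1 := by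
  nlinarith

/-- For the equilateral triangle inscribed in the unit circle, every point of
the plane is at distance at least `1` from one of the vertices, with equality
of the maximum distance exactly at the center. -/
theorem max_dist_to_inscribed_triangle (p : EuclideanSpace ℝ (Fin 2)) :
    1 ≤ max (dist p (circlePt 0))
        (max (dist p (circlePt (2 * π / 3))) (dist p (circlePt (4 * π / 3)))) ∧
      (max (dist p (circlePt 0))
          (max (dist p (circlePt (2 * π / 3))) (dist p (circlePt (4 * π / 3)))) = 1 ↔
        p = 0) := by
  have hc2 : Real.cos (2 * π / 3) = -(1 / 2) := by
    rw [show (2 * π / 3) = π - π / 3 by ring, Real.cos_pi_sub, Real.cos_pi_div_three]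
  have hs2 : Real.sin (2 * π / 3) = Real.sqrt 3 / 2 := by
    rw [show (2 * π / 3) = π - π / 3 by ring, Real.sin_pi_sub, Real.sin_pi_div_three]
  have hc4 : Real.cos (4 * π / 3) = -(1 / 2) := by
    rw [show (4 * π / 3) = π + π / 3 by ring, Real.cos_add, Real.cos_pi, Real.sin_pi, Real.cos_pi_div_three]; ring
  have hs4 : Real.sin (4 * π / 3) = -(Real.sqrt 3 / 2) := by
    rw [show (4 * π / 3) = π + π / 3 by ring, Real.sin_add, Real.sin_pi, Real.cos_pi, Real.sin_pi_div_three]; ring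
  have h3 : Real.sqrt 3 ^ 2 = 3 := Real.sq_sqrt (by norm_num)
  set a := dist p (circlePt 0) with ha
  set b := dist p (circlePt (2 * π / 3)) with hb
  set c := dist p (circlePt (4 * π / 3)) with hc
  have ha2 : a ^ 2 = (p 0 - 1) ^ 2 + (p 1) ^ 2 := by
    rw [ha, dist_circlePt_sq]; simp
  have hb2 : b ^ 2 = (p 0 + 1 / 2) ^ 2 + (p 1 - Real.sqrt 3 / 2) ^ 2 := by
    rw [hb, dist_circlePt_sq, hc2, hs2]; ring
  have hc2' : c ^ 2 = (p 0 + 1 / 2) ^ 2 + (p 1 + Real.sqrt 3 / 2) ^ 2 := by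
    rw [hc, dist_circlePt_sq, hc4, hs4]; ring
  set x := p 0 with hx
  set y := p 1 with hy
  have hsum : a ^ 2 + b ^ 2 + c ^ 2 = 3 * (x ^ 2 + y ^ 2) + 3 := by
    rw [ha2, hb2, hc2']; nlinarith [h3]
  have ha0 : 0 ≤ a := dist_nonneg
  have hb0 : 0 ≤ b := dist_nonneg
  have hc0 : 0 ≤ c := dist_nonneg
  have hma : a ≤ max a (max b c) := le_max_left _ _
  have hmb : b ≤ max a (max b c) := le_trans (le_max_left _ _) (le_max_right _ _)
  have hmc : c ≤ max a (max b c) := le_trans (le_max_right _ _) (le_max_right _ _)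
  have hm0 : 0 ≤ max a (max b c) := le_trans ha0 hma
  have hsq : a ^ 2 + b ^ 2 + c ^ 2 ≤ 3 * (max a (max b c)) ^ 2 := by
    linarith [pow_le_pow_left₀ ha0 hma 2, pow_le_pow_left₀ hb0 hmb 2, pow_le_pow_left₀ hc0 hmc 2]
  have hM1 : 1 ≤ (max a (max b c)) ^ 2 := by
    linarith [hsq, sq_nonneg x, sq_nonneg y]
  have hge : 1 ≤ max a (max b c) := one_le_of_one_le_sq hm0 hM1
  refine ⟨hge, ⟨fun hM => ?_, fun hp => ?_⟩⟩
  · have hs3 : a ^ 2 + b ^ 2 + c ^ 2 ≤ 3 := by rw [hM] at hsq; linarith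
    have hxy : x ^ 2 + y ^ 2 ≤ 0 := by linarith
    have hx2 : x ^ 2 = 0 := le_antisymm (by linarith [sq_nonneg y]) (sq_nonneg x)
    have hy2 : y ^ 2 = 0 := le_antisymm (by linarith [sq_nonneg x]) (sq_nonneg y)
    have hx0 : x = 0 := by
      have := sq_eq_zero_iff.mp hx2; simpa using this
    have hy0 : y = 0 := by
      have := sq_eq_zero_iff.mp hy2; simpa using this
    ext i
    fin_cases i
    · exact hx0
    · exact hy0
  · subst hp
    have hp0 : (0 : EuclideanSpace ℝ (Fin 2)) 0 = 0 := rfl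
    have hp1 : (0 : EuclideanSpace ℝ (Fin 2)) 1 = 0 := rfl
    have hx0 : x = 0 := hx.trans hp0
    have hy0 : y = 0 := hy.trans hp1
    rw [hx0, hy0] at ha2 hb2 hc2'
    have ea : a ^ 2 = 1 := by rw [ha2]; ring
    have eb : b ^ 2 = 1 := by rw [hb2]; linear_combination h3 / 4
    have ec : c ^ 2 = 1 := by rw [hc2']; linear_combination h3 / 4
    have ha1 : a = 1 := eq_one_of_sq_eq_one ha0 ea
    have hb1 : b = 1 := eq_one_of_sq_eq_one hb0 eb
    have hc1 : c = 1 := eq_one_of_sq_eq_one hc0 ec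
    rw [ha1, hb1, hc1]
    simp
end

section
/- For all x ∈ [0, π/2], x + min(2·sin x, 2·cos x) ≤ π/4 + √2. -/
open Real Set

/- Below `π/4` bound the minimum by `2 sin x ≤ √2`. Above `π/4` bound it by `2 cos x`:
there `sin x ≥ 1/2`, so `x + 2 cos x` has nonpositive derivative `1 - 2 sin x` and is
maximal at `π/4`, where it equals `π/4 + √2`. -/

theorem add_two_mul_sin_le_of_le_pi_div_four {x : ℝ} (hx₀ : -(π / 2) ≤ x) (hx : x ≤ π / 4) :
    x + 2 * sin x ≤ π / 4 + √2 := by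
  have hsin : sin x ≤ sin (π / 4) :=
    sin_le_sin_of_le_of_le_pi_div_two hx₀ (by linarith [pi_pos]) hx
  rw [sin_pi_div_four] at hsin
  linarith

theorem antitoneOn_add_two_mul_cos :
    AntitoneOn (fun x => x + 2 * cos x) (Icc (π / 6) (π / 2)) := by
  refine antitoneOn_of_deriv_nonpos (convex_Icc _ _) (by fun_prop) (by fun_prop) fun x hx => ?_
  rw [interior_Icc] at hx
  have hsin : sin (π / 6) ≤ sin x :=
    sin_le_sin_of_le_of_le_pi_div_two (by linarith [pi_pos]) hx.2.le hx.1.le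
  rw [sin_pi_div_six] at hsin
  have hderiv : deriv (fun x => x + 2 * cos x) x = 1 - 2 * sin x := by
    have h : HasDerivAt (fun y => y + 2 * cos y) (1 + 2 * -sin x) x :=
      (hasDerivAt_id' x).add ((hasDerivAt_cos x).const_mul 2)
    rw [h.deriv]
    ring
  linarith

/-- For all `x ∈ [0, π/2]`, `x + min (2 sin x) (2 cos x) ≤ π/4 + √2`. -/
theorem wireless_worst_case_bound (x : ℝ) (hx : x ∈ Set.Icc 0 (π / 2)) :
    x + min (2 * Real.sin x) (2 * Real.cos x) ≤ π / 4 + Real.sqrt 2 := by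
  obtain ⟨hx₀, hx₁⟩ := hx
  rcases le_total x (π / 4) with hx | hx
  · calc x + min (2 * sin x) (2 * cos x) ≤ x + 2 * sin x := by gcongr; exact min_le_left _ _
      _ ≤ π / 4 + √2 := add_two_mul_sin_le_of_le_pi_div_four (by linarith [pi_pos]) hx
  · have hpi := pi_pos
    calc x + min (2 * sin x) (2 * cos x) ≤ x + 2 * cos x := by gcongr; exact min_le_right _ _
      _ ≤ π / 4 + 2 * cos (π / 4) :=
        antitoneOn_add_two_mul_cos ⟨by linarith, by linarith⟩ ⟨by linarith, hx₁⟩ hx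
      _ = π / 4 + √2 := by rw [cos_pi_div_four]; ring
end

section
/- For any three points v₁, v₂, v₃ on the unit circle whose convex hull contains the origin, and any point p ∈ ℝ², max(‖p − v₁‖, ‖p − v₂‖, ‖p − v₃‖) ≥ 1. -/
open Real

section

variable {E : Type*} [NormedAddCommGroup E] [InnerProductSpace ℝ E]

theorem half_norm_sq_lt_inner_of_dist_lt_norm {p v : E} (h : dist p v < ‖v‖) :
    ‖p‖ ^ 2 / 2 < inner ℝ p v := by
  have hsq : ‖p - v‖ ^ 2 < ‖v‖ ^ 2 := by
    rw [← dist_eq_norm]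
    exact pow_lt_pow_left₀ h dist_nonneg two_ne_zero
  rw [norm_sub_sq_real] at hsq
  linarith

/-- The points `v` with `dist p v < ‖v‖` form the open half-space `‖p‖² / 2 < ⟪p, v⟫`,
which is convex and misses the origin. -/
theorem exists_norm_le_dist_of_zero_mem_convexHull {S : Set E}
    (hS : (0 : E) ∈ convexHull ℝ S) (p : E) : ∃ v ∈ S, ‖v‖ ≤ dist p v := by
  by_contra! hclose
  have hsub : S ⊆ {v | ‖p‖ ^ 2 / 2 < inner ℝ p v} := fun v hv =>
    half_norm_sq_lt_inner_of_dist_lt_norm (hclose v hv)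
  have hconvex : Convex ℝ {v | ‖p‖ ^ 2 / 2 < inner ℝ p v} :=
    convex_halfSpace_gt (innerₛₗ ℝ p).isLinear _
  have h0 : ‖p‖ ^ 2 / 2 < inner ℝ p (0 : E) := convexHull_min hsub hconvex hS
  rw [inner_zero_right] at h0
  linarith [sq_nonneg ‖p‖]

end

/-- For any three points on the unit circle whose convex hull contains the
origin, every point of the plane is at distance at least `1` from one of
them. -/
theorem max_dist_ge_one_of_hull_contains_center
    (v₁ v₂ v₃ : EuclideanSpace ℝ (Fin 2))
    (h₁ : ‖v₁‖ = 1) (h₂ : ‖v₂‖ = 1) (h₃ : ‖v₃‖ = 1)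
    (hhull : (0 : EuclideanSpace ℝ (Fin 2)) ∈ convexHull ℝ {v₁, v₂, v₃})
    (p : EuclideanSpace ℝ (Fin 2)) :
    1 ≤ max (dist p v₁) (max (dist p v₂) (dist p v₃)) := by
  obtain ⟨v, hv, hfar⟩ := exists_norm_le_dist_of_zero_mem_convexHull hhull p
  rcases hv with rfl | rfl | rfl
  · rw [h₁] at hfar
    exact hfar.trans (le_max_left _ _)
  · rw [h₂] at hfar
    exact hfar.trans ((le_max_left _ _).trans (le_max_right _ _))
  · rw [h₃] at hfar
    exact hfar.trans ((le_max_right _ _).trans (le_max_right _ _))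
end
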